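/- Let p be a prime. The number of triples (g,h,a) with 1 ≤ g, h, a ≤ p−1 satisfying g^h ≡ a (mod p), g^a ≡ h (mod p), and h a primitive root mod p equals the number of pairs (h,a) with 1 ≤ h, a ≤ p−1 satisfying h^h ≡ a^a (mod p), h a primitive root mod p, and gcd(a, p−1) = 1. -/

import Mathlib

/-!
Forgetting `g` maps solutions of the two-cycle equation onto solutions of `h ^ h = a ^ a`:
`h ^ h = (g ^ a) ^ h = (g ^ h) ^ a = a ^ a`, and since `h = g ^ a` is a primitive root, `a` is
prime to `p - 1`. Exponentiation by such an `a` is invertible on `(ZMod p)ˣ`, with inverse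
exponentiation by `b ≡ a⁻¹ (mod p - 1)`; this makes the map injective, and `g = h ^ b` is the
preimage of `(h, a)`.
-/

section Monoid

variable {M : Type*} [Monoid M]

theorem pow_pow_eq_self_of_mul_modEq_one {x : M} {n a b : ℕ} (hx : x ^ n = 1)
    (hab : a * b ≡ 1 [MOD n]) : (x ^ a) ^ b = x := by
  have hab' : a * b ≡ 1 [MOD orderOf x] := hab.of_dvd (orderOf_dvd_of_pow_eq_one hx)
  rw [← pow_mul, ← pow_mod_orderOf, hab', pow_mod_orderOf, pow_one]

theorem Nat.Coprime.of_orderOf_pow_eq {x : M} {a n : ℕ} (hn : 0 < n) (hx : orderOf x ∣ n)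
    (h : orderOf (x ^ a) = n) : a.Coprime n := by
  have hxn : orderOf x = n := Nat.dvd_antisymm hx (h ▸ orderOf_pow_dvd a)
  rcases Nat.eq_zero_or_pos a with rfl | ha
  · simp only [pow_zero, orderOf_one] at h
    exact h ▸ Nat.coprime_one_right 0
  rw [orderOf_pow' x ha.ne', hxn, Nat.div_eq_self] at h
  exact Nat.coprime_comm.mp (h.resolve_left hn.ne')

theorem Nat.Coprime.exists_mul_modEq_one {a n : ℕ} (h : a.Coprime n) :
    ∃ b, a * b ≡ 1 [MOD n] := by
  rcases Nat.eq_zero_or_pos n with rfl | hn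
  · exact ⟨1, by rw [(Nat.coprime_zero_right a).mp h]⟩
  obtain ⟨b, -, hb⟩ := Nat.exists_mul_mod_eq_of_coprime 1 h hn.ne'
  exact ⟨b, hb⟩

theorem Nat.Coprime.eq_of_pow_eq_pow {x y : M} {a n : ℕ} (ha : a.Coprime n) (hx : x ^ n = 1)
    (hy : y ^ n = 1) (h : x ^ a = y ^ a) : x = y := by
  obtain ⟨b, hab⟩ := ha.exists_mul_modEq_one
  rw [← pow_pow_eq_self_of_mul_modEq_one hx hab, ← pow_pow_eq_self_of_mul_modEq_one hy hab, h]

end Monoid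

section TwoCycle

variable {R : Type*} [Semiring R] {h a : ℕ}

theorem pow_self_eq_pow_self_of_twoCycle {g : R} (hgh : g ^ h = a) (hga : g ^ a = h) :
    (h : R) ^ h = (a : R) ^ a := by
  rw [← hgh, ← hga, ← pow_mul, ← pow_mul, mul_comm]

theorem exists_twoCycle_of_pow_self_eq {n : ℕ} (ha : a.Coprime n) (hhn : (h : R) ^ n = 1)
    (han : (a : R) ^ n = 1) (heq : (h : R) ^ h = (a : R) ^ a) :
    ∃ g : R, g ^ h = a ∧ g ^ a = h := by
  obtain ⟨b, hab⟩ := ha.exists_mul_modEq_one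
  refine ⟨(h : R) ^ b, ?_, ?_⟩
  · rw [pow_right_comm, heq, pow_pow_eq_self_of_mul_modEq_one han hab]
  · rw [pow_right_comm, pow_pow_eq_self_of_mul_modEq_one hhn hab]

end TwoCycle

theorem ZMod.natCast_ne_zero_of_pos_of_lt {p x : ℕ} (h0 : 0 < x) (hp : x < p) :
    (x : ZMod p) ≠ 0 := by
  rw [Ne, ZMod.natCast_eq_zero_iff]
  exact Nat.not_dvd_of_pos_of_lt h0 hp

open scoped Classical in
theorem stmt_18 (p : ℕ) (hp : p.Prime) :
    ((Finset.Icc 1 (p - 1) ×ˢ Finset.Icc 1 (p - 1) ×ˢ Finset.Icc 1 (p - 1)).filter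
      (fun t : ℕ × ℕ × ℕ => t.1 ^ t.2.1 ≡ t.2.2 [MOD p] ∧ t.1 ^ t.2.2 ≡ t.2.1 [MOD p] ∧
        orderOf ((t.2.1 : ZMod p)) = p - 1)).card
    =
    ((Finset.Icc 1 (p - 1) ×ˢ Finset.Icc 1 (p - 1)).filter
      (fun ha : ℕ × ℕ => ha.1 ^ ha.1 ≡ ha.2 ^ ha.2 [MOD p] ∧
        orderOf ((ha.1 : ZMod p)) = p - 1 ∧
        Nat.gcd ha.2 (p - 1) = 1)).card := by
  have : Fact p.Prime := ⟨hp⟩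
  have hp1 : 0 < p - 1 := Nat.sub_pos_of_lt hp.one_lt
  have cast_ne_zero {x : ℕ} (h1 : 1 ≤ x) (h2 : x ≤ p - 1) : (x : ZMod p) ≠ 0 :=
    ZMod.natCast_ne_zero_of_pos_of_lt h1 (by omega)
  have fermat {x : ℕ} (h1 : 1 ≤ x) (h2 : x ≤ p - 1) : (x : ZMod p) ^ (p - 1) = 1 :=
    ZMod.pow_card_sub_one_eq_one (cast_ne_zero h1 h2)
  have coprime {g h a : ℕ} (h1 : 1 ≤ g) (h2 : g ≤ p - 1) (hga : (g : ZMod p) ^ a = h)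
      (hh : orderOf (h : ZMod p) = p - 1) : a.Coprime (p - 1) :=
    .of_orderOf_pow_eq hp1 (ZMod.orderOf_dvd_card_sub_one (cast_ne_zero h1 h2)) (hga ▸ hh)
  refine Finset.card_bij (fun t _ => (t.2.1, t.2.2)) ?_ ?_ ?_ <;>
    simp only [Finset.mem_filter, Finset.mem_product, Finset.mem_Icc,
      ← ZMod.natCast_eq_natCast_iff, Nat.cast_pow]
  · rintro ⟨g, h, a⟩ ⟨⟨⟨hg1, hg2⟩, hh, ha⟩, hgh, hga, hord⟩
    exact ⟨⟨hh, ha⟩, pow_self_eq_pow_self_of_twoCycle hgh hga, hord, coprime hg1 hg2 hga hord⟩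
  · rintro ⟨g, h, a⟩ ⟨⟨⟨hg1, hg2⟩, -, -⟩, -, hga, hord⟩
      ⟨g', h', a'⟩ ⟨⟨⟨hg1', hg2'⟩, -, -⟩, -, hga', -⟩ heq
    obtain ⟨rfl, rfl⟩ := Prod.mk.inj heq
    have hcast : (g : ZMod p) = g' := (coprime hg1 hg2 hga hord).eq_of_pow_eq_pow
      (fermat hg1 hg2) (fermat hg1' hg2') (hga.trans hga'.symm)
    obtain rfl : g = g' := by
      rw [← ZMod.val_cast_of_lt (by omega : g < p), hcast, ZMod.val_cast_of_lt (by omega)]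
    rfl
  · rintro ⟨h, a⟩ ⟨⟨⟨hh1, hh2⟩, ha1, ha2⟩, heq, hord, hcop⟩
    obtain ⟨g, hgh, hga⟩ :=
      exists_twoCycle_of_pow_self_eq hcop (fermat hh1 hh2) (fermat ha1 ha2) heq
    have hg : g ≠ 0 := ne_zero_pow (by omega) (hga ▸ cast_ne_zero hh1 hh2)
    refine ⟨(g.val, h, a), ⟨⟨⟨ZMod.val_pos.mpr hg, ?_⟩, ⟨hh1, hh2⟩, ha1, ha2⟩, ?_⟩, rfl⟩
    · have := ZMod.val_lt g; omega
    · simpa only [ZMod.natCast_val, ZMod.cast_id', id] using ⟨hgh, hga, hord⟩
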